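/- arXiv:0706.2147 — 4 statements merged into one kernel-verified Lean document; each statement's English description precedes it below -/
import Mathlib

section
/- Replica representation of truncated correlations: Let γ ∈ {1,…,n} satisfy gcd(n, γ) = 1. Then for all sites i₁, …, iₙ ∈ Λ, the truncated correlation of n spins equals n^{(n−2)/2} times the (untruncated) replica expectation of the product of s-variables: ⟨σ_{i₁} σ_{i₂} ⋯ σ_{iₙ}⟩^T_{Λ,β} = n^{(n−2)/2} · ⟨⟨ s^{(γ)}_{i₁} s^{(γ)}_{i₂} ⋯ s^{(γ)}_{iₙ} ⟩⟩_{Λ,β}. -/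
/-!
Put `ζ = ω ^ γ`, a primitive `n`-th root of unity since `gcd(n, γ) = 1`. Expanding the product
gives `∏ₖ s_{iₖ} = n^{-n/2} ∑_{a : [n] → [n]} ζ^{∑ₖ aₖ} ∏_α ∏_{aₖ = α} σ^{(α)}_{iₖ}`, and as the
replicas are independent copies of the Gibbs measure, the replica expectation of each term is the
product of `⟨∏_{k ∈ B} σ_{iₖ}⟩` over the blocks `B` of the kernel partition of `a`. The maps `a`
with kernel partition `P` are the injective `c : P → [n]` composed with the block map, of weight
`∏_B ζ^{|B| c_B}`. Every block but a single one has size `< n`, so a sum of `ζ^{|B| b}` over all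
`b` vanishes: summing out the blocks one by one turns the sum over values not yet taken into minus
the sum over those taken, and the total weight is `(-1)^{|P|-1} (|P|-1)! n`, the coefficient of
`P` in the truncated correlation.
-/

open scoped BigOperators Classical
noncomputable section

namespace IsingReplica

/-- Lattice sites in `ℤ^d`. -/
abbrev Site (d : ℕ) := Fin d → ℤ

/-- `i` and `j` are nearest neighbors: `|i - j| = 1`. -/
def nn {d : ℕ} (i j : Site d) : Prop := (∑ k, |i k - j k|) = 1

instance {d : ℕ} (i j : Site d) : Decidable (nn i j) :=
  inferInstanceAs (Decidable ((∑ k, |i k - j k|) = 1))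

/-- The spin values `{+1, -1}`. -/
abbrev SpinVal : Type := ↥({1, -1} : Finset ℤ)

/-- Spin configurations on a finite volume `Λ`. -/
abbrev Config {d : ℕ} (Λ : Finset (Site d)) : Type := {x // x ∈ Λ} → SpinVal

/-- The spin at a site, as a real number (extended by `+1` outside `Λ`). -/
def spin {d : ℕ} {Λ : Finset (Site d)} (σ : Config Λ) (i : Site d) : ℝ :=
  if h : i ∈ Λ then ((σ ⟨i, h⟩ : ℤ) : ℝ) else 1

/-- The boundary sites of `Λ`: sites whose unit cube shares a `(d-1)`-face with the
topological boundary of the union of the closed unit cubes of `Λ`; equivalently,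
sites of `Λ` having a nearest neighbor outside `Λ`. -/
def latBoundary {d : ℕ} (Λ : Finset (Site d)) : Finset (Site d) :=
  Λ.filter fun i => ∃ j, nn i j ∧ j ∉ Λ

/-- `+1` boundary conditions. -/
def PlusBC {d : ℕ} {Λ : Finset (Site d)} (σ : Config Λ) : Prop :=
  ∀ i (h : i ∈ Λ), i ∈ latBoundary Λ → ((σ ⟨i, h⟩ : ℤ) = 1)

/-- The Ising Hamiltonian `H_Λ(σ) = Σ_{⟨i,j⟩} (1 - σ_i σ_j)`, the sum over unordered
nearest-neighbor pairs written as half the sum over ordered pairs. -/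
def HΛ {d : ℕ} {Λ : Finset (Site d)} (σ : Config Λ) : ℝ :=
  (1 / 2) * ∑ i : {x // x ∈ Λ}, ∑ j : {x // x ∈ Λ},
    if nn i.1 j.1 then 1 - spin σ i.1 * spin σ j.1 else 0

/-- The partition function with `+1` boundary conditions. -/
def Z {d : ℕ} (Λ : Finset (Site d)) (β : ℝ) : ℝ :=
  ∑ σ : Config Λ, if PlusBC σ then Real.exp (-β * HΛ σ) else 0

/-- The Gibbs expectation `⟨f⟩_{Λ,β}` with `+1` boundary conditions. -/
def gibbsExp {d : ℕ} (Λ : Finset (Site d)) (β : ℝ) (f : Config Λ → ℝ) : ℝ :=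
  (Z Λ β)⁻¹ * ∑ σ : Config Λ, if PlusBC σ then f σ * Real.exp (-β * HΛ σ) else 0

/-- The set partitions of `{0, …, m-1}`: families of nonempty blocks such that every
element lies in exactly one block. -/
def partitions (m : ℕ) : Finset (Finset (Finset (Fin m))) :=
  Finset.univ.filter fun P =>
    (∀ B ∈ P, B.Nonempty) ∧ ∀ x : Fin m, ∃! B, B ∈ P ∧ x ∈ B

/-- The truncated (connected) correlation
`⟨σ_{j 0} ⋯ σ_{j (m-1)}⟩^T = Σ_𝒫 (-1)^(|𝒫|-1) (|𝒫|-1)! ∏_{B ∈ 𝒫} ⟨∏_{k ∈ B} σ_{j k}⟩`. -/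
def truncCorr {d : ℕ} (Λ : Finset (Site d)) (β : ℝ) {m : ℕ} (j : Fin m → Site d) : ℝ :=
  ∑ P ∈ partitions m,
    (-1 : ℝ) ^ (P.card - 1) * (Nat.factorial (P.card - 1) : ℝ) *
      ∏ B ∈ P, gibbsExp Λ β fun σ => ∏ k ∈ B, spin σ (j k)

/-- `n`-replica configurations on `Λ`. -/
abbrev RConfig {d : ℕ} (Λ : Finset (Site d)) (n : ℕ) : Type :=
  {x // x ∈ Λ} → Fin n → SpinVal

/-- The replica component `σ^{(α)}` (the index `a : Fin n` encodes `α = a + 1`). -/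
def comp {d n : ℕ} {Λ : Finset (Site d)} (σv : RConfig Λ n) (a : Fin n) : Config Λ :=
  fun i => σv i a

/-- `+1` boundary conditions in every replica component. -/
def RPlusBC {d n : ℕ} {Λ : Finset (Site d)} (σv : RConfig Λ n) : Prop :=
  ∀ a, PlusBC (comp σv a)

/-- The replica Hamiltonian `H_rep(σ⃗) = Σ_α H_Λ(σ^{(α)})`. -/
def Hrep {d n : ℕ} {Λ : Finset (Site d)} (σv : RConfig Λ n) : ℝ :=
  ∑ a, HΛ (comp σv a)

/-- The spin of the replica component `α = a + 1` at site `i`. -/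
def rspin {d n : ℕ} {Λ : Finset (Site d)} (σv : RConfig Λ n) (a : Fin n) (i : Site d) : ℝ :=
  spin (comp σv a) i

/-- `ω = e^{2πi/n}`, the primitive `n`-th root of unity. -/
def rootn (n : ℕ) : ℂ := Complex.exp (2 * Real.pi * Complex.I / n)

/-- The replica Fourier variables
`s_i^{(γ)}(σ⃗) = n^{-1/2} Σ_{α'=1}^n ω^{γ(α'-1)} σ_i^{(α')}`
(the summation index `a : Fin n` encodes `α' = a + 1`). -/
def sVar {d n : ℕ} {Λ : Finset (Site d)} (γ : ℕ) (σv : RConfig Λ n) (i : Site d) : ℂ :=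
  (Real.sqrt n : ℂ)⁻¹ * ∑ a : Fin n, rootn n ^ (γ * (a : ℕ)) * (rspin σv a i : ℂ)

/-- The replica expectation `⟨⟨F⟩⟩_{Λ,β} = Z^{-n} Σ_{σ⃗} F(σ⃗) e^{-β H_rep(σ⃗)}`. -/
def rExp {d : ℕ} (Λ : Finset (Site d)) (β : ℝ) (n : ℕ) (F : RConfig Λ n → ℂ) : ℂ :=
  ((Z Λ β ^ n : ℝ) : ℂ)⁻¹ *
    ∑ σv : RConfig Λ n,
      if RPlusBC σv then F σv * Complex.exp (-(β : ℂ) * (Hrep σv : ℂ)) else 0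

/-- The truncated replica expectation of `m` factors, defined by the partition formula. -/
def rTrunc {d : ℕ} (Λ : Finset (Site d)) (β : ℝ) (n : ℕ) {m : ℕ}
    (F : Fin m → RConfig Λ n → ℂ) : ℂ :=
  ∑ P ∈ partitions m,
    (-1 : ℂ) ^ (P.card - 1) * (Nat.factorial (P.card - 1) : ℂ) *
      ∏ B ∈ P, rExp Λ β n fun σv => ∏ k ∈ B, F k σv

/-- Connectivity of `a` and `b` by a nearest-neighbor path inside the set `X`. -/
def connIn {d : ℕ} (X : Finset (Site d)) (a b : Site d) : Prop :=
  Relation.ReflTransGen (fun x y => x ∈ X ∧ y ∈ X ∧ nn x y) a b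

/-- The sites of `Λ` where all replica components equal `+1`. -/
def onesSet {d n : ℕ} {Λ : Finset (Site d)} (σv : RConfig Λ n) : Finset (Site d) :=
  Λ.filter fun i => ∀ h : i ∈ Λ, ∀ a, ((σv ⟨i, h⟩ a : ℤ) = 1)

/-- The replica sea: the part of the all-ones set connected to the boundary `∂Λ`. -/
def sea {d n : ℕ} {Λ : Finset (Site d)} (σv : RConfig Λ n) : Finset (Site d) :=
  (onesSet σv).filter fun i => ∃ j ∈ latBoundary Λ, connIn (onesSet σv) j i

/-- `K` is a continent of `σ⃗`: a connected component of `Λ \ 𝒮(σ⃗)`. -/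
def IsContinent {d n : ℕ} {Λ : Finset (Site d)} (σv : RConfig Λ n)
    (K : Finset (Site d)) : Prop :=
  K.Nonempty ∧ K ⊆ Λ \ sea σv ∧
    (∀ a ∈ K, ∀ b ∈ K, connIn (Λ \ sea σv) a b) ∧
    (∀ a ∈ K, ∀ b ∈ Λ \ sea σv, connIn (Λ \ sea σv) a b → b ∈ K)

/-- The local cyclic replica transformation `π_𝒦`: on sites of `K` it cyclically shifts
the replica index (`(π_𝒦 σ⃗)_i^{(α)} = σ_i^{(α-1)}`, indices mod `n`), elsewhere it is
the identity. -/
def piK {d n : ℕ} {Λ : Finset (Site d)} (K : Finset (Site d)) (σv : RConfig Λ n) :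
    RConfig Λ n :=
  fun i a => if (i : Site d) ∈ K then σv i ⟨((a : ℕ) + n - 1) % n, Nat.mod_lt _ a.pos⟩ else σv i a

/-- The length of the shortest tree connecting the sites `i 0, …, i (m-1)`:
the minimal number of edges of a connected subgraph of the nearest-neighbor graph
on `ℤ^d` whose vertex set contains all the given sites. -/
def treeLen {d m : ℕ} (i : Fin m → Site d) : ℕ :=
  sInf {r : ℕ | ∃ E : Finset (Site d × Site d),
    E.card = r ∧ (∀ e ∈ E, nn e.1 e.2) ∧
    ∀ x ∈ Finset.univ.image i ∪ E.image Prod.fst ∪ E.image Prod.snd,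
      ∀ y ∈ Finset.univ.image i ∪ E.image Prod.fst ∪ E.image Prod.snd,
        Relation.ReflTransGen (fun a b => (a, b) ∈ E ∨ (b, a) ∈ E) x y}

/-- A face: the common `(d-1)`-face of the unit cubes centered at `c` and `c + e_k`,
encoded by the pair `(c, k)`. -/
abbrev Face (d : ℕ) := Site d × Fin d

/-- The face `(c, k)` as a subset of `ℝ^d`. -/
def faceSet {d : ℕ} (F : Face d) : Set (Fin d → ℝ) :=
  {x | x F.2 = (F.1 F.2 : ℝ) + 1 / 2 ∧ ∀ j, j ≠ F.2 → |x j - (F.1 j : ℝ)| ≤ 1 / 2}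

/-- Two faces are adjacent if they are distinct and their intersection contains a
`(d-2)`-dimensional unit cube. -/
def adjFace {d : ℕ} (F F' : Face d) : Prop :=
  F ≠ F' ∧ ∃ j₁ j₂ : Fin d, j₁ ≠ j₂ ∧ ∃ z : Fin d → ℝ,
    {x : Fin d → ℝ | x j₁ = z j₁ ∧ x j₂ = z j₂ ∧
        ∀ j, j ≠ j₁ → j ≠ j₂ → z j ≤ x j ∧ x j ≤ z j + 1} ⊆ faceSet F ∩ faceSet F'

/-- Connectivity of faces by a chain of adjacent faces inside `Y`. -/
def faceConnIn {d : ℕ} (Y : Finset (Face d)) (A B : Face d) : Prop :=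
  Relation.ReflTransGen (fun x y => x ∈ Y ∧ y ∈ Y ∧ adjFace x y) A B

/-- A connected surface. -/
def SurfConnected {d : ℕ} (Y : Finset (Face d)) : Prop :=
  ∀ F ∈ Y, ∀ F' ∈ Y, faceConnIn Y F F'

/-- The `k`-th coordinate unit vector. -/
def unitVec {d : ℕ} (k : Fin d) : Site d := fun j => if j = k then 1 else 0

/-- The broken faces of a spin configuration: common faces of nearest-neighbor pairs
in `Λ` whose spins differ. -/
def brokenFaces {d : ℕ} {Λ : Finset (Site d)} (σ : Config Λ) : Finset (Face d) :=
  (Λ ×ˢ (Finset.univ : Finset (Fin d))).filter fun F =>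
    F.1 + unitVec F.2 ∈ Λ ∧ spin σ F.1 ≠ spin σ (F.1 + unitVec F.2)

/-- The faces forming the topological boundary of the union of the unit cubes of `K`. -/
def bFaces {d : ℕ} (K : Finset (Site d)) : Finset (Face d) :=
  ((K ×ˢ (Finset.univ : Finset (Fin d))).filter fun F => F.1 + unitVec F.2 ∉ K) ∪
    (((K ×ˢ (Finset.univ : Finset (Fin d))).image fun F => (F.1 - unitVec F.2, F.2)).filter
      fun F => F.1 ∉ K)

/-- The component `C^{(α)}(𝒦, σ⃗)` of the replica continent contour: the union of
those contours (connected components of broken faces) of `σ^{(α)}` sharing at least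
one face with `∂𝒦`. -/
def contContour {d n : ℕ} {Λ : Finset (Site d)} (σv : RConfig Λ n) (K : Finset (Site d))
    (a : Fin n) : Finset (Face d) :=
  (brokenFaces (comp σv a)).filter fun F =>
    ∃ F₀ ∈ brokenFaces (comp σv a), F₀ ∈ bFaces K ∧ faceConnIn (brokenFaces (comp σv a)) F₀ F

/-- `C(𝒦)`: the set of replica continent contours `C⃗(𝒦, σ⃗)` as `σ⃗` ranges over
`n`-replica configurations (with `+1` boundary conditions) having `𝒦` as a continent. -/
def contourSet {d : ℕ} (Λ : Finset (Site d)) (n : ℕ) (K : Finset (Site d)) :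
    Set (Fin n → Finset (Face d)) :=
  {C | ∃ σv : RConfig Λ n, RPlusBC σv ∧ IsContinent σv K ∧ ∀ a, C a = contContour σv K a}


end IsingReplica

open Finset

theorem Real.rpow_sub_two_div_two_mul_self {x : ℝ} (hx : 0 < x) (k : ℕ) :
    x ^ (((k : ℝ) - 2) / 2) * x = Real.sqrt x ^ k := by
  rw [← Real.rpow_add_one hx.ne', Real.sqrt_eq_rpow, ← Real.rpow_natCast, ← Real.rpow_mul hx.le]
  ring_nf

namespace IsPrimitiveRoot

variable {R : Type*} [CommRing R] [IsDomain R] {ζ : R} {n : ℕ}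

theorem sum_pow_mul_eq_zero (hζ : IsPrimitiveRoot ζ n) {r : ℕ} (hr : ¬n ∣ r) :
    ∑ b : Fin n, ζ ^ (r * b) = 0 := by
  have hne : ζ ^ r ≠ 1 := fun h => hr ((hζ.pow_eq_one_iff_dvd r).1 h)
  have hpow : (ζ ^ r) ^ n = 1 := by rw [← pow_mul, mul_comm, pow_mul, hζ.pow_eq_one, one_pow]
  simp_rw [pow_mul]
  rw [Fin.sum_univ_eq_sum_range (fun b => (ζ ^ r) ^ b)]
  refine eq_zero_of_ne_zero_of_mul_left_eq_zero (sub_ne_zero_of_ne hne.symm) ?_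
  rw [mul_neg_geom_sum, hpow, sub_self]

theorem sum_compl_range_pow_mul (hζ : IsPrimitiveRoot ζ n) {r : ℕ} (hr : ¬n ∣ r)
    {ι : Type*} [Fintype ι] (c : ι ↪ Fin n) :
    ∑ b : {b // b ∉ Set.range c}, ζ ^ (r * b) = -∑ j, ζ ^ (r * c j) := by
  have hrange : ∑ b : {b // b ∈ Set.range c}, ζ ^ (r * (b : Fin n)) = ∑ j, ζ ^ (r * c j) :=
    (Equiv.sum_comp (Equiv.ofInjective c c.injective) fun b => ζ ^ (r * (b : Fin n))).symm
  rw [eq_neg_iff_add_eq_zero, ← hrange, add_comm, ← hζ.sum_pow_mul_eq_zero hr]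
  convert Fintype.sum_subtype_add_sum_subtype (· ∈ Set.range c) fun b : Fin n => ζ ^ (r * b)

theorem sum_embedding_fin_prod_pow_mul (hζ : IsPrimitiveRoot ζ n) (p : ℕ) (m : Fin (p + 1) → ℕ)
    (hm : ∀ j, 0 < m j) (hsum : ∑ j, m j = n) :
    ∑ c : Fin (p + 1) ↪ Fin n, ∏ j, ζ ^ (m j * c j) = (-1) ^ p * p.factorial * n := by
  induction p with
  | zero =>
    have hm0 : m 0 = n := by simpa using hsum
    simp [hm0, pow_mul, hζ.pow_eq_one, Fintype.card_embedding_eq]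
  | succ p ih =>
    have hm0 : ¬n ∣ m 0 := by
      refine Nat.not_dvd_of_pos_of_lt (hm 0) ?_
      rw [← hsum, Fin.sum_univ_succ]
      exact Nat.lt_add_of_pos_right (sum_pos (fun j _ => hm j.succ) univ_nonempty)
    -- Summing out `c 0`, which ranges over the complement of the other values, moves the
    -- weight `m 0` onto one of the remaining blocks `j`, with a sign.
    let m' (j : Fin (p + 1)) : Fin (p + 1) → ℕ :=
      fun j' => m j'.succ + (Pi.single j (m 0) : Fin (p + 1) → ℕ) j'
    have merge (c : Fin (p + 1) ↪ Fin n) (j : Fin (p + 1)) :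
        ζ ^ (m 0 * c j) * ∏ j', ζ ^ (m j'.succ * c j') = ∏ j', ζ ^ (m' j j' * c j') := by
      have hsingle : ∏ j', ζ ^ ((Pi.single j (m 0) : Fin (p + 1) → ℕ) j' * c j') =
          ζ ^ (m 0 * c j) := by
        rw [Fintype.prod_eq_single j fun j' hj' => by simp [hj']]
        simp
      simp_rw [m', add_mul, pow_add, prod_mul_distrib, hsingle, mul_comm]
    have hm' (j : Fin (p + 1)) : ∑ j', m' j j' = n := by
      rw [sum_add_distrib, sum_pi_single', if_pos (mem_univ j), ← hsum,
        Fin.sum_univ_succ (f := m), add_comm]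
    rw [← (Equiv.embeddingFinSucc (p + 1) (Fin n)).symm.sum_comp, Fintype.sum_sigma]
    simp only [Equiv.coe_embeddingFinSucc_symm, Fin.prod_univ_succ (n := p + 1), Fin.cons_zero,
      Fin.cons_succ]
    simp_rw [← sum_mul, hζ.sum_compl_range_pow_mul hm0, neg_mul, sum_mul, merge, sum_neg_distrib]
    rw [sum_comm]
    simp_rw [ih (m' _) (fun j' => Nat.add_pos_left (hm j'.succ) _) (hm' _)]
    simp only [sum_const, card_univ, Fintype.card_fin, nsmul_eq_mul, Nat.factorial_succ]
    push_cast
    ring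

theorem sum_embedding_prod_pow_mul (hζ : IsPrimitiveRoot ζ n) {ι : Type*} [Fintype ι]
    [Nonempty ι] (m : ι → ℕ) (hm : ∀ j, 0 < m j) (hsum : ∑ j, m j = n) :
    ∑ c : ι ↪ Fin n, ∏ j, ζ ^ (m j * c j) =
      (-1) ^ (Fintype.card ι - 1) * (Fintype.card ι - 1).factorial * n := by
  obtain ⟨p, hp⟩ := Nat.exists_eq_succ_of_ne_zero (Fintype.card_ne_zero (α := ι))
  let e : ι ≃ Fin (p + 1) := (Fintype.equivFin ι).trans (finCongr hp)
  rw [hp, Nat.succ_sub_one, ← hζ.sum_embedding_fin_prod_pow_mul p (m ∘ e.symm) (fun j => hm _)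
    (by rw [← hsum]; exact Fintype.sum_equiv e.symm _ _ fun _ => rfl)]
  exact Fintype.sum_equiv (e.embeddingCongr (Equiv.refl _)) _ _ fun c =>
    Fintype.prod_equiv e _ _ fun j => by simp

end IsPrimitiveRoot

namespace IsingReplica

section Partitions

variable {m : ℕ} {P : Finset (Finset (Fin m))}

theorem mem_partitions :
    P ∈ partitions m ↔ (∀ B ∈ P, B.Nonempty) ∧ ∀ x : Fin m, ∃! B, B ∈ P ∧ x ∈ B := by
  simp [partitions]

def blockOf (hP : P ∈ partitions m) (x : Fin m) : P :=
  ⟨P.choose (x ∈ ·) ((mem_partitions.1 hP).2 x), P.choose_mem _ _⟩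

theorem blockOf_eq_iff (hP : P ∈ partitions m) {x : Fin m} {B : P} :
    blockOf hP x = B ↔ x ∈ (B : Finset (Fin m)) := by
  have hx : x ∈ (blockOf hP x : Finset (Fin m)) := P.choose_property (x ∈ ·) _
  refine ⟨fun h => h ▸ hx, fun hB => Subtype.ext ?_⟩
  exact ((mem_partitions.1 hP).2 x).unique ⟨(blockOf hP x).2, hx⟩ ⟨B.2, hB⟩

theorem blockOf_surjective (hP : P ∈ partitions m) : Function.Surjective (blockOf hP) := by
  intro B
  obtain ⟨x, hx⟩ := (mem_partitions.1 hP).1 B B.2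
  exact ⟨x, (blockOf_eq_iff hP).2 hx⟩

theorem sum_comp_blockOf {M : Type*} [AddCommMonoid M] (hP : P ∈ partitions m) (f : P → M) :
    ∑ x, f (blockOf hP x) = ∑ B : P, (B : Finset (Fin m)).card • f B := by
  rw [← sum_fiberwise' univ (blockOf hP) f]
  refine sum_congr rfl fun B _ => ?_
  have hfiber : ({x | blockOf hP x = B} : Finset (Fin m)) = B := by
    ext x
    simp [blockOf_eq_iff]
  rw [sum_const, hfiber]

variable {α : Type*} [DecidableEq α]

def kerPartition (a : Fin m → α) : Finset (Finset (Fin m)) :=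
  (univ.image a).image fun b => ({k | a k = b} : Finset (Fin m))

theorem mem_kerPartition {a : Fin m → α} {B : Finset (Fin m)} :
    B ∈ kerPartition a ↔ ∃ x, ({k | a k = a x} : Finset (Fin m)) = B := by
  simp [kerPartition]

theorem kerPartition_mem_partitions (a : Fin m → α) : kerPartition a ∈ partitions m := by
  refine mem_partitions.2 ⟨?_, fun x => ⟨({k | a k = a x} : Finset (Fin m)),
    ⟨mem_kerPartition.2 ⟨x, rfl⟩, by simp⟩, ?_⟩⟩
  · rintro B hB
    obtain ⟨x, rfl⟩ := mem_kerPartition.1 hB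
    exact ⟨x, by simp⟩
  · rintro B ⟨hB, hxB⟩
    obtain ⟨y, rfl⟩ := mem_kerPartition.1 hB
    ext k
    simp_all

theorem kerPartition_eq_iff (hP : P ∈ partitions m) {a : Fin m → α} :
    kerPartition a = P ↔ ∀ x y, a x = a y ↔ blockOf hP x = blockOf hP y := by
  constructor
  · rintro rfl x y
    have hblock (z : Fin m) :
        (blockOf hP z : Finset (Fin m)) = ({k | a k = a z} : Finset (Fin m)) :=
      congrArg Subtype.val
        ((blockOf_eq_iff hP (B := ⟨_, mem_kerPartition.2 ⟨z, rfl⟩⟩)).2 (by simp))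
    rw [← Subtype.val_inj, hblock, hblock]
    refine ⟨fun h => by simp [h], fun h => ?_⟩
    have hx : x ∈ ({k | a k = a x} : Finset (Fin m)) := by simp
    rw [h] at hx
    simpa using hx
  · intro h
    have hblock (z : Fin m) : ({k | a k = a z} : Finset (Fin m)) = blockOf hP z := by
      ext k
      simp [h, blockOf_eq_iff]
    ext B
    simp_rw [mem_kerPartition, hblock]
    refine ⟨?_, fun hB => ?_⟩
    · rintro ⟨x, rfl⟩
      exact (blockOf hP x).2
    · obtain ⟨x, hx⟩ := blockOf_surjective hP ⟨B, hB⟩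
      exact ⟨x, by rw [hx]⟩

theorem prod_fiber_eq_prod_kerPartition {M : Type*} [CommMonoid M] [Fintype α] (a : Fin m → α)
    (G : Finset (Fin m) → M) (hG : G ∅ = 1) :
    ∏ b, G ({k | a k = b} : Finset (Fin m)) = ∏ B ∈ kerPartition a, G B := by
  rw [kerPartition, prod_image, ← prod_subset (subset_univ _)]
  · intro b _ hb
    have hempty : ({k | a k = b} : Finset (Fin m)) = ∅ := by
      ext k
      simp only [mem_filter, mem_univ, true_and, notMem_empty, iff_false]
      exact fun hk => hb (mem_image.2 ⟨k, mem_univ _, hk⟩)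
    rw [hempty, hG]
  · intro b hb b' _ hbb'
    obtain ⟨k, -, rfl⟩ := mem_image.1 hb
    have hk : k ∈ ({j | a j = a k} : Finset (Fin m)) := by simp
    simpa [hbb'] using hk

variable {R : Type*} [CommRing R] [IsDomain R] {ζ : R} {n : ℕ}

theorem sum_pow_sum_of_kerPartition_eq (hζ : IsPrimitiveRoot ζ n) (hn : 0 < n)
    {P : Finset (Finset (Fin n))} (hP : P ∈ partitions n) :
    ∑ a : Fin n → Fin n with kerPartition a = P, ζ ^ ∑ k, (a k : ℕ) =
      (-1) ^ (P.card - 1) * (P.card - 1).factorial * n := by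
  have : Nonempty P := ⟨blockOf hP ⟨0, hn⟩⟩
  have hcard : ∑ B : P, (B : Finset (Fin n)).card = n := by
    simpa using (sum_comp_blockOf hP fun _ => (1 : ℕ)).symm
  rw [← Fintype.card_coe P, ← hζ.sum_embedding_prod_pow_mul (fun B : P => (B : Finset (Fin n)).card)
    (fun B => card_pos.2 ((mem_partitions.1 hP).1 B B.2)) hcard]
  symm
  refine sum_bij (fun c _ => c ∘ blockOf hP) (fun c _ => ?_) (fun c _ c' _ h => ?_)
    (fun a ha => ?_) (fun c _ => ?_)
  · simp [kerPartition_eq_iff hP, c.injective.eq_iff]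
  · exact DFunLike.coe_injective ((blockOf_surjective hP).injective_comp_right h)
  · have hker := (kerPartition_eq_iff hP).1 (mem_filter.1 ha).2
    let s := Function.surjInv (blockOf_surjective hP)
    have hs (x : Fin n) : a (s (blockOf hP x)) = a x :=
      (hker _ _).2 (Function.surjInv_eq (blockOf_surjective hP) _)
    refine ⟨⟨a ∘ s, fun B B' h => ?_⟩, mem_univ _, funext hs⟩
    rw [← Function.surjInv_eq (blockOf_surjective hP) B,
      ← Function.surjInv_eq (blockOf_surjective hP) B']
    exact (hker _ _).1 h
  · rw [prod_pow_eq_pow_sum, Function.comp_def, sum_comp_blockOf hP fun B => (c B : ℕ)]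
    simp

theorem sum_pow_sum_mul_prod_kerPartition (hζ : IsPrimitiveRoot ζ n) (hn : 0 < n)
    (G : Finset (Fin n) → R) :
    ∑ a : Fin n → Fin n, ζ ^ (∑ k, (a k : ℕ)) * ∏ B ∈ kerPartition a, G B =
      n * ∑ P ∈ partitions n,
        (-1) ^ (P.card - 1) * (P.card - 1).factorial * ∏ B ∈ P, G B := by
  rw [← sum_fiberwise_of_maps_to (fun a _ => kerPartition_mem_partitions a), mul_sum]
  refine sum_congr rfl fun P hP => ?_
  rw [sum_congr rfl fun a ha => by rw [(mem_filter.1 ha).2], ← sum_mul,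
    sum_pow_sum_of_kerPartition_eq hζ hn hP]
  ring

end Partitions

section Gibbs

variable {d : ℕ} {Λ : Finset (Site d)} {β : ℝ}

def boltzmannWeight (β : ℝ) (σ : Config Λ) : ℝ :=
  if PlusBC σ then Real.exp (-β * HΛ σ) else 0

theorem gibbsExp_eq (f : Config Λ → ℝ) :
    gibbsExp Λ β f = (Z Λ β)⁻¹ * ∑ σ, f σ * boltzmannWeight β σ := by
  simp only [gibbsExp, boltzmannWeight, mul_ite, mul_zero]

theorem Z_pos : 0 < Z Λ β := by
  have hplus : PlusBC (Λ := Λ) fun _ => ⟨1, by simp⟩ := fun _ _ _ => rfl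
  refine sum_pos' (fun σ _ => ?_) ⟨_, mem_univ _, (if_pos hplus).trans_gt (Real.exp_pos _)⟩
  by_cases h : PlusBC σ <;> simp [h, (Real.exp_pos _).le]

theorem gibbsExp_const_one : gibbsExp Λ β (fun _ => 1) = 1 := by
  rw [gibbsExp_eq]
  simp only [one_mul]
  exact inv_mul_cancel₀ Z_pos.ne'

variable {n : ℕ}

theorem prod_boltzmannWeight_comp (σv : RConfig Λ n) :
    ∏ a, boltzmannWeight β (comp σv a) =
      if RPlusBC σv then Real.exp (-β * Hrep σv) else 0 := by
  by_cases h : RPlusBC σv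
  · simp only [boltzmannWeight, if_pos (h _), if_pos h, Hrep, mul_sum, Real.exp_sum]
  · obtain ⟨a, ha⟩ := not_forall.1 h
    rw [if_neg h]
    exact prod_eq_zero (mem_univ a) (if_neg ha)

theorem rExp_ofReal (F : RConfig Λ n → ℝ) :
    rExp Λ β n (fun σv => (F σv : ℂ)) =
      (((Z Λ β ^ n)⁻¹ * ∑ σv, F σv * ∏ a, boltzmannWeight β (comp σv a) : ℝ) : ℂ) := by
  simp only [rExp, prod_boltzmannWeight_comp, mul_ite, mul_zero]
  push_cast [apply_ite Complex.ofReal]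
  rfl

theorem rExp_prod_comp (f : Fin n → Config Λ → ℝ) :
    rExp Λ β n (fun σv => ((∏ a, f a (comp σv a) : ℝ) : ℂ)) =
      ((∏ a, gibbsExp Λ β (f a) : ℝ) : ℂ) := by
  rw [rExp_ofReal]
  congr 1
  simp only [gibbsExp_eq, prod_mul_distrib, prod_const, card_univ, Fintype.card_fin, inv_pow]
  congr 1
  rw [Fintype.prod_sum]
  exact Fintype.sum_equiv (Equiv.piComm _) _ _ fun σv => prod_mul_distrib.symm

theorem rExp_sum_mul {ι : Type*} (s : Finset ι) (c : ι → ℂ) (F : ι → RConfig Λ n → ℂ) :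
    rExp Λ β n (fun σv => ∑ x ∈ s, c x * F x σv) = ∑ x ∈ s, c x * rExp Λ β n (F x) := by
  simp only [rExp, mul_sum]
  rw [sum_comm]
  refine sum_congr rfl fun σv _ => ?_
  split_ifs <;> simp [sum_mul, mul_sum, mul_left_comm, mul_assoc]

theorem prod_sVar (γ : ℕ) (σv : RConfig Λ n) {m : ℕ} (i : Fin m → Site d) :
    ∏ k, sVar γ σv (i k) =
      ∑ a : Fin m → Fin n, ((Real.sqrt n : ℂ)⁻¹ ^ m * (rootn n ^ γ) ^ ∑ k, (a k : ℕ)) *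
        ((∏ b, ∏ k with a k = b, spin (comp σv b) (i k) : ℝ) : ℂ) := by
  simp only [sVar, prod_mul_distrib, prod_const, card_univ, Fintype.card_fin, Fintype.prod_sum,
    mul_sum]
  refine sum_congr rfl fun a _ => ?_
  simp_rw [mul_assoc, pow_mul, prod_pow_eq_pow_sum]
  congr 2
  rw [← prod_fiberwise univ a]
  push_cast
  refine prod_congr rfl fun b _ => prod_congr rfl fun k hk => ?_
  rw [rspin, (mem_filter.1 hk).2]

theorem rExp_prod_sVar (γ : ℕ) {m : ℕ} (i : Fin m → Site d) :
    rExp Λ β n (fun σv => ∏ k, sVar γ σv (i k)) =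
      (Real.sqrt n : ℂ)⁻¹ ^ m * ∑ a : Fin m → Fin n, (rootn n ^ γ) ^ (∑ k, (a k : ℕ)) *
        ∏ B ∈ kerPartition a, ((gibbsExp Λ β fun σ => ∏ k ∈ B, spin σ (i k) : ℝ) : ℂ) := by
  simp_rw [prod_sVar, rExp_sum_mul, mul_sum, mul_assoc]
  refine sum_congr rfl fun a _ => ?_
  rw [rExp_prod_comp (fun b σ => ∏ k with a k = b, spin σ (i k)), Complex.ofReal_prod,
    prod_fiber_eq_prod_kerPartition a
      (fun B => ((gibbsExp Λ β fun σ => ∏ k ∈ B, spin σ (i k) : ℝ) : ℂ))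
      (by simp [gibbsExp_const_one])]

end Gibbs

theorem truncated_correlation_replica_representation_general (d : ℕ)
    (Λ : Finset (Site d)) (β : ℝ) (n : ℕ) (hn : 1 ≤ n)
    (γ : ℕ) (hgcd : Nat.gcd n γ = 1)
    (i : Fin n → Site d) :
    (truncCorr Λ β i : ℂ) =
      (((n : ℝ) ^ (((n : ℝ) - 2) / 2) : ℝ) : ℂ) *
        rExp Λ β n (fun σv => ∏ k, sVar γ σv (i k)) := by
  have hζ : IsPrimitiveRoot (rootn n ^ γ) n :=
    (Complex.isPrimitiveRoot_exp n (by omega)).pow_of_coprime γ (Nat.coprime_comm.1 hgcd)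
  have hsqrt : Real.sqrt n ^ n ≠ 0 := pow_ne_zero _ (Real.sqrt_pos.2 (by exact_mod_cast hn)).ne'
  have hscalar :
      (((n : ℝ) ^ (((n : ℝ) - 2) / 2) : ℝ) : ℂ) * (Real.sqrt n : ℂ)⁻¹ ^ n * n = 1 := by
    rw [mul_right_comm, ← Complex.ofReal_natCast, ← Complex.ofReal_mul,
      Real.rpow_sub_two_div_two_mul_self (by exact_mod_cast hn), inv_pow, ← Complex.ofReal_pow]
    exact mul_inv_cancel₀ (by exact_mod_cast hsqrt)
  rw [rExp_prod_sVar, sum_pow_sum_mul_prod_kerPartition hζ hn, ← mul_assoc, ← mul_assoc, hscalar,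
    one_mul, truncCorr]
  push_cast
  rfl

/-- **Replica representation of truncated correlations.** For `γ ∈ {1, …, n}` with
`gcd(n, γ) = 1` and sites `i 0, …, i (n-1) ∈ Λ`,
`⟨σ_{i 0} ⋯ σ_{i (n-1)}⟩^T_{Λ,β} = n^{(n-2)/2} ⟨⟨ s^{(γ)}_{i 0} ⋯ s^{(γ)}_{i (n-1)} ⟩⟩_{Λ,β}`. -/
theorem truncated_correlation_replica_representation (d : ℕ) (hd : 2 ≤ d)
    (Λ : Finset (Site d)) (β : ℝ) (hβ : 0 < β) (n : ℕ) (hn : 1 ≤ n)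
    (γ : ℕ) (hγ1 : 1 ≤ γ) (hγn : γ ≤ n) (hgcd : Nat.gcd n γ = 1)
    (i : Fin n → Site d) (hi : ∀ k, i k ∈ Λ) :
    (truncCorr Λ β i : ℂ) =
      (((n : ℝ) ^ (((n : ℝ) - 2) / 2) : ℝ) : ℂ) *
        rExp Λ β n (fun σv => ∏ k, sVar γ σv (i k)) :=
  truncated_correlation_replica_representation_general d Λ β n hn γ hgcd i

end IsingReplica
end
end

section
/- Vanishing lemma for s-correlations: Let k ≥ 1 and γ ∈ {1,…,n} be such that kγ ≢ 0 (mod n). Then for any sites i₁, …, i_k ∈ Λ, the replica expectation vanishes: ⟨⟨ s^{(γ)}_{i₁} s^{(γ)}_{i₂} ⋯ s^{(γ)}_{i_k} ⟩⟩_{Λ,β} = 0. -/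
open scoped BigOperators Classical
noncomputable section

namespace IsingReplica

/-!
The cyclic relabelling of the replicas `α ↦ α + 1` preserves the replica Gibbs weight, since
the Hamiltonian and the boundary conditions are symmetric in the replicas, and it multiplies
every `s^{(γ)}_i` by `ω^{-γ}`. The product of `k` of them thus picks up the phase
`ω^{-kγ} ≠ 1`, so its replica expectation equals itself times that phase and must vanish.
-/

lemma pow_val_add_one {M : Type*} [Monoid M] {n : ℕ} [NeZero n] {x : M} (hx : x ^ n = 1)
    (a : Fin n) : x ^ ((a + 1 : Fin n) : ℕ) = x * x ^ (a : ℕ) := by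
  have pow_mod_n : ∀ m, x ^ (m % n) = x ^ m := fun m => by
    conv_rhs => rw [← Nat.div_add_mod m n, pow_add, pow_mul, hx, one_pow, one_mul]
  rw [Fin.val_add, pow_mod_n, pow_add, Fin.val_one', pow_mod_n, pow_one, ← pow_succ, ← pow_succ']

lemma isPrimitiveRoot_rootn {n : ℕ} (hn : n ≠ 0) : IsPrimitiveRoot (rootn n) n :=
  Complex.isPrimitiveRoot_exp n hn

section Replicas

variable {d n : ℕ} {Λ : Finset (Site d)}

def permReplicas (e : Equiv.Perm (Fin n)) : RConfig Λ n ≃ RConfig Λ n :=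
  Equiv.arrowCongr (Equiv.refl _) (Equiv.arrowCongr e.symm (Equiv.refl SpinVal))

@[simp]
lemma permReplicas_apply (e : Equiv.Perm (Fin n)) (σv : RConfig Λ n) (x : {x // x ∈ Λ})
    (a : Fin n) : permReplicas e σv x a = σv x (e a) := by
  simp [permReplicas, Equiv.arrowCongr]

@[simp]
lemma comp_permReplicas (e : Equiv.Perm (Fin n)) (σv : RConfig Λ n) (a : Fin n) :
    comp (permReplicas e σv) a = comp σv (e a) := by
  funext x
  simp [comp]

lemma rspin_permReplicas (e : Equiv.Perm (Fin n)) (σv : RConfig Λ n) (a : Fin n)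
    (j : Site d) : rspin (permReplicas e σv) a j = rspin σv (e a) j := by
  simp [rspin]

lemma Hrep_permReplicas (e : Equiv.Perm (Fin n)) (σv : RConfig Λ n) :
    Hrep (permReplicas e σv) = Hrep σv := by
  simp only [Hrep, comp_permReplicas]
  exact Equiv.sum_comp e fun a => HΛ (comp σv a)

lemma rPlusBC_permReplicas (e : Equiv.Perm (Fin n)) (σv : RConfig Λ n) :
    RPlusBC (permReplicas e σv) ↔ RPlusBC σv := by
  simp only [RPlusBC, comp_permReplicas]
  exact e.forall_congr_right (q := fun a => PlusBC (comp σv a))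

lemma rExp_comp_permReplicas (β : ℝ) (e : Equiv.Perm (Fin n)) (F : RConfig Λ n → ℂ) :
    rExp Λ β n (fun σv => F (permReplicas e σv)) = rExp Λ β n F := by
  unfold rExp
  conv_rhs => rw [← (permReplicas e).sum_comp]
  simp only [rPlusBC_permReplicas, Hrep_permReplicas]

lemma rExp_const_mul (β : ℝ) (c : ℂ) (F : RConfig Λ n → ℂ) :
    rExp Λ β n (fun σv => c * F σv) = c * rExp Λ β n F := by
  simp only [rExp, Finset.mul_sum, mul_ite, mul_zero, mul_assoc, mul_left_comm c]

lemma rExp_eq_zero_of_permReplicas (β : ℝ) (e : Equiv.Perm (Fin n)) {c : ℂ} (hc : c ≠ 1)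
    (F : RConfig Λ n → ℂ) (hF : ∀ σv, F σv = c * F (permReplicas e σv)) :
    rExp Λ β n F = 0 := by
  have h : rExp Λ β n F = c * rExp Λ β n F := by
    conv_lhs => rw [funext hF, rExp_const_mul, rExp_comp_permReplicas]
  by_contra h0
  exact hc ((mul_eq_right₀ h0).mp h.symm)

lemma sVar_eq_mul_sVar_shift [NeZero n] (γ : ℕ) (σv : RConfig Λ n) (j : Site d) :
    sVar γ σv j = rootn n ^ γ * sVar γ (permReplicas (Equiv.addRight 1) σv) j := by
  have hω : (rootn n ^ γ) ^ n = 1 := by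
    rw [← pow_mul, mul_comm, pow_mul, (isPrimitiveRoot_rootn (NeZero.ne n)).pow_eq_one, one_pow]
  unfold sVar
  rw [mul_left_comm (rootn n ^ γ)]
  congr 1
  rw [Finset.mul_sum, ← Equiv.sum_comp (Equiv.addRight (1 : Fin n))
    fun a : Fin n => rootn n ^ (γ * (a : ℕ)) * (rspin σv a j : ℂ)]
  refine Finset.sum_congr rfl fun a _ => ?_
  rw [rspin_permReplicas, ← mul_assoc, Equiv.coe_addRight, pow_mul, pow_mul,
    pow_val_add_one hω]

end Replicas

theorem vanishing_s_correlations_general (d : ℕ)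
    (Λ : Finset (Site d)) (β : ℝ) (n : ℕ) (hn : 1 ≤ n)
    (k : ℕ) (γ : ℕ)
    (hmod : ¬ n ∣ k * γ) (i : Fin k → Site d) :
    rExp Λ β n (fun σv => ∏ m, sVar γ σv (i m)) = 0 := by
  have hn0 : n ≠ 0 := by omega
  have : NeZero n := ⟨hn0⟩
  have hphase : rootn n ^ (k * γ) ≠ 1 :=
    fun h => hmod (((isPrimitiveRoot_rootn hn0).pow_eq_one_iff_dvd _).mp h)
  refine rExp_eq_zero_of_permReplicas β (Equiv.addRight 1) hphase _ fun σv => ?_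
  simp_rw [sVar_eq_mul_sVar_shift γ σv, Finset.prod_mul_distrib, Finset.prod_const,
    Finset.card_univ, Fintype.card_fin, ← pow_mul, mul_comm γ k]

/-- **Vanishing lemma for `s`-correlations.** If `k ≥ 1`, `γ ∈ {1, …, n}` and
`kγ ≢ 0 (mod n)`, then `⟨⟨ s^{(γ)}_{i 0} ⋯ s^{(γ)}_{i (k-1)} ⟩⟩_{Λ,β} = 0`. -/
theorem vanishing_s_correlations (d : ℕ) (hd : 2 ≤ d)
    (Λ : Finset (Site d)) (β : ℝ) (hβ : 0 < β) (n : ℕ) (hn : 1 ≤ n)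
    (k : ℕ) (hk : 1 ≤ k) (γ : ℕ) (hγ1 : 1 ≤ γ) (hγn : γ ≤ n)
    (hmod : ¬ n ∣ k * γ) (i : Fin k → Site d) (hi : ∀ m, i m ∈ Λ) :
    rExp Λ β n (fun σv => ∏ m, sVar γ σv (i m)) = 0 :=
  vanishing_s_correlations_general d Λ β n hn k γ hmod i
end IsingReplica
end
end

section
/- Local cyclic replica symmetry on continents: Let σ⃗ be an n-replica configuration with +1 boundary conditions and let 𝒦 ∈ 𝒦(σ⃗) be one of its continents. Then the local cyclic replica transformation π_𝒦 preserves the sea and the continents, i.e. 𝒮(π_𝒦 σ⃗) = 𝒮(σ⃗) and 𝒦(π_𝒦 σ⃗) = 𝒦(σ⃗), and it preserves the energy: H_rep(π_𝒦 σ⃗) = H_rep(σ⃗). -/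
open scoped BigOperators Classical
noncomputable section

namespace IsingReplica

/-
The transformation `π_𝒦` permutes the replica labels at each site, so it fixes the set of
all-plus sites and hence the sea and the continents. The energy is a sum over nearest-neighbor
pairs of `Σ_α σ_i^{(α)} σ_j^{(α)}`. If both sites lie in `𝒦` this sum is only reindexed, if
neither does it is untouched, and a neighbor of `𝒦` outside `𝒦` belongs to the sea, where
every replica spin is `+1`, so the sum reduces to a reindexed `Σ_α σ_i^{(α)}`.
-/

variable {d n : ℕ} {Λ : Finset (Site d)}

lemma nn_comm {i j : Site d} : nn i j ↔ nn j i := by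
  simp only [nn, abs_sub_comm (i _)]

lemma piK_apply (K : Finset (Site d)) (σv : RConfig Λ n) (i : {x // x ∈ Λ}) (a : Fin n) :
    piK K σv i a = if (i : Site d) ∈ K then σv i ((finRotate n).symm a) else σv i a := by
  have hshift : (⟨((a : ℕ) + n - 1) % n, Nat.mod_lt _ a.pos⟩ : Fin n) = (finRotate n).symm a := by
    rw [Equiv.eq_symm_apply, finRotate_apply, Fin.ext_iff, Fin.val_add, Fin.val_one',
      Nat.add_mod_mod, Nat.mod_add_mod, Nat.sub_add_cancel (by omega), Nat.add_mod_right,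
      Nat.mod_eq_of_lt a.isLt]
  rw [piK, hshift]

lemma rspin_piK (K : Finset (Site d)) (σv : RConfig Λ n) (a : Fin n) (i : Site d) :
    rspin (piK K σv) a i = if i ∈ K then rspin σv ((finRotate n).symm a) i else rspin σv a i := by
  by_cases hi : i ∈ Λ <;> by_cases hiK : i ∈ K <;>
    simp [rspin, spin, comp, piK_apply, hi, hiK]

lemma sum_rspin_piK (K : Finset (Site d)) (σv : RConfig Λ n) (i : Site d) :
    ∑ a, rspin (piK K σv) a i = ∑ a, rspin σv a i := by
  simp only [rspin_piK]
  split_ifs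
  exacts [(finRotate n).symm.sum_comp (rspin σv · i), rfl]

lemma onesSet_piK (K : Finset (Site d)) (σv : RConfig Λ n) :
    onesSet (piK K σv) = onesSet σv := by
  ext i
  simp only [onesSet, Finset.mem_filter, piK_apply, and_congr_right_iff]
  intro _
  split_ifs
  · exact forall_congr' fun hi =>
      (finRotate n).symm.forall_congr_right (q := fun a => ((σv ⟨i, hi⟩ a : ℤ) = 1))
  · rfl

lemma sea_piK (K : Finset (Site d)) (σv : RConfig Λ n) : sea (piK K σv) = sea σv := by
  rw [sea, sea, onesSet_piK]

lemma isContinent_piK_iff (K K' : Finset (Site d)) (σv : RConfig Λ n) :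
    IsContinent (piK K σv) K' ↔ IsContinent σv K' := by
  rw [IsContinent, IsContinent, sea_piK]

lemma rspin_eq_one_of_mem_onesSet {σv : RConfig Λ n} {i : Site d} (hi : i ∈ onesSet σv)
    (a : Fin n) : rspin σv a i = 1 := by
  obtain ⟨hiΛ, hone⟩ := Finset.mem_filter.mp hi
  simp [rspin, spin, comp, hiΛ, hone hiΛ a]

lemma sum_rspin_mul_rspin_piK {K : Finset (Site d)} {σv : RConfig Λ n} {i j : Site d}
    (h : (i ∈ K ↔ j ∈ K) ∨ i ∈ onesSet σv ∨ j ∈ onesSet σv) :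
    ∑ a, rspin (piK K σv) a i * rspin (piK K σv) a j = ∑ a, rspin σv a i * rspin σv a j := by
  rcases h with hK | hi | hj
  · by_cases hiK : i ∈ K
    · simp only [rspin_piK, hiK, hK.mp hiK, if_true]
      exact (finRotate n).symm.sum_comp fun a => rspin σv a i * rspin σv a j
    · simp only [rspin_piK, hiK, mt hK.mpr hiK, if_false]
  · have hi' : i ∈ onesSet (piK K σv) := onesSet_piK K σv ▸ hi
    simp only [rspin_eq_one_of_mem_onesSet hi, rspin_eq_one_of_mem_onesSet hi', one_mul]
    exact sum_rspin_piK K σv j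
  · have hj' : j ∈ onesSet (piK K σv) := onesSet_piK K σv ▸ hj
    simp only [rspin_eq_one_of_mem_onesSet hj, rspin_eq_one_of_mem_onesSet hj', mul_one]
    exact sum_rspin_piK K σv i

lemma Hrep_eq_sum_nn (σv : RConfig Λ n) :
    Hrep σv = 1 / 2 * ∑ i : {x // x ∈ Λ}, ∑ j : {x // x ∈ Λ},
      if nn i.1 j.1 then n - ∑ a, rspin σv a i * rspin σv a j else 0 := by
  simp only [Hrep, HΛ, ← Finset.mul_sum]
  rw [Finset.sum_comm]
  refine congrArg _ (Finset.sum_congr rfl fun i _ => ?_)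
  rw [Finset.sum_comm]
  refine Finset.sum_congr rfl fun j _ => ?_
  split_ifs
  · simp [rspin, Finset.sum_sub_distrib]
  · simp

lemma Hrep_piK {K : Finset (Site d)} {σv : RConfig Λ n}
    (h : ∀ i ∈ Λ, ∀ j ∈ Λ, nn i j → (i ∈ K ↔ j ∈ K) ∨ i ∈ onesSet σv ∨ j ∈ onesSet σv) :
    Hrep (piK K σv) = Hrep σv := by
  simp only [Hrep_eq_sum_nn]
  refine congrArg _ (Finset.sum_congr rfl fun i _ => Finset.sum_congr rfl fun j _ => ?_)
  split_ifs with hij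
  · rw [sum_rspin_mul_rspin_piK (h i i.2 j j.2 hij)]
  · rfl

lemma IsContinent.mem_sea_of_nn {σv : RConfig Λ n} {K : Finset (Site d)}
    (hK : IsContinent σv K) {i j : Site d} (hi : i ∈ K) (hj : j ∈ Λ) (hjK : j ∉ K)
    (hij : nn i j) : j ∈ sea σv := by
  by_contra hjs
  have hj' : j ∈ Λ \ sea σv := Finset.mem_sdiff.mpr ⟨hj, hjs⟩
  exact hjK (hK.2.2.2 i hi j hj' (.single ⟨hK.2.1 hi, hj', hij⟩))

lemma IsContinent.mem_iff_or_mem_onesSet {σv : RConfig Λ n} {K : Finset (Site d)}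
    (hK : IsContinent σv K) {i j : Site d} (hi : i ∈ Λ) (hj : j ∈ Λ) (hij : nn i j) :
    (i ∈ K ↔ j ∈ K) ∨ i ∈ onesSet σv ∨ j ∈ onesSet σv := by
  by_cases hiK : i ∈ K <;> by_cases hjK : j ∈ K
  · exact .inl (iff_of_true hiK hjK)
  · exact .inr (.inr (Finset.mem_filter.mp (hK.mem_sea_of_nn hiK hj hjK hij)).1)
  · exact .inr (.inl (Finset.mem_filter.mp (hK.mem_sea_of_nn hjK hi hiK (nn_comm.mp hij))).1)
  · exact .inl (iff_of_false hiK hjK)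

theorem local_cyclic_replica_symmetry_general (d : ℕ)
    (Λ : Finset (Site d)) (n : ℕ)
    (σv : RConfig Λ n) (K : Finset (Site d)) (hK : IsContinent σv K) :
    sea (piK K σv) = sea σv ∧
      (∀ K' : Finset (Site d), IsContinent (piK K σv) K' ↔ IsContinent σv K') ∧
      Hrep (piK K σv) = Hrep σv :=
  ⟨sea_piK K σv, fun K' => isContinent_piK_iff K K' σv,
    Hrep_piK fun _ hi _ hj hij => hK.mem_iff_or_mem_onesSet hi hj hij⟩

/-- **Local cyclic replica symmetry on continents.** If `σ⃗` has `+1` boundary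
conditions and `𝒦 ∈ 𝒦(σ⃗)` is one of its continents, then `π_𝒦` preserves the sea,
the continents, and the energy. -/
theorem local_cyclic_replica_symmetry (d : ℕ) (hd : 2 ≤ d)
    (Λ : Finset (Site d)) (n : ℕ) (hn : 1 ≤ n)
    (σv : RConfig Λ n) (hbc : RPlusBC σv) (K : Finset (Site d)) (hK : IsContinent σv K) :
    sea (piK K σv) = sea σv ∧
      (∀ K' : Finset (Site d), IsContinent (piK K σv) K' ↔ IsContinent σv K') ∧
      Hrep (piK K σv) = Hrep σv :=
  local_cyclic_replica_symmetry_general d Λ n σv K hK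

end IsingReplica
end
end

section
/- Entropy bound for random lattice surfaces: Let d ≥ 2, let S₀ be a fixed face, and for r ≥ 1 let N(r) denote the number of connected surfaces consisting of exactly r faces and containing S₀. Then N(r) ≤ k_d^r with k_d = 3e·2^d (i.e. there is a constant a = 3e, independent of dimension, with N(r) ≤ (a·2^d)^r). -/
open scoped BigOperators Classical
noncomputable section

lemma Set.encard_image2_le {α β γ : Type*} (f : α → β → γ) (s : Set α) (t : Set β) :
    (Set.image2 f s t).encard ≤ s.encard * t.encard := by
  rw [← Set.image_uncurry_prod, ← Set.encard_prod]
  exact Set.encard_image_le _ _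

lemma sum_pow_mul_catalan_mul (Δ k : ℕ) :
    ∑ i : Fin (k + 1), Δ ^ (i : ℕ) * catalan i * (Δ ^ (k - i) * catalan (k - i)) =
      Δ ^ k * catalan (k + 1) := by
  rw [catalan_succ, Finset.mul_sum]
  refine Finset.sum_congr rfl fun i _ => ?_
  have hpow : Δ ^ (i : ℕ) * Δ ^ (k - i) = Δ ^ k := by
    rw [← pow_add, Nat.add_sub_cancel' (Nat.lt_succ_iff.1 i.isLt)]
  rw [← hpow]
  ring

lemma catalan_le_four_pow (k : ℕ) : catalan k ≤ 4 ^ k := by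
  rw [catalan_eq_centralBinom_div]
  exact (Nat.div_le_self _ _).trans (Nat.centralBinom_le_four_pow k)

namespace Relation

variable {V : Type*} (adj : V → V → Prop)

def AdjWithin (Y : Finset V) (p q : V) : Prop := p ∈ Y ∧ q ∈ Y ∧ adj p q

def ConnectedFrom (Y : Finset V) (x : V) : Prop :=
  x ∈ Y ∧ ∀ a ∈ Y, ReflTransGen (AdjWithin adj Y) x a

def rootedConnectedSets (n : ℕ) (x : V) : Set (Finset V) :=
  {Y | Y.card = n ∧ ConnectedFrom adj Y x}

variable {adj}

lemma exists_adj_mem_erase_of_reflTransGen {Y : Finset V} {x b : V}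
    (h : ReflTransGen (AdjWithin adj Y) x b) (hb : b ≠ x) : ∃ z ∈ Y.erase x, adj x z := by
  induction h with
  | refl => exact absurd rfl hb
  | @tail a c _ hac ih =>
    by_cases hax : a = x
    · subst hax
      exact ⟨c, Finset.mem_erase.2 ⟨hb, hac.2.1⟩, hac.2.2⟩
    · exact ih hax

lemma reflTransGen_adjWithin_of_closed {S T : Finset V}
    (hT : ∀ p ∈ T, ∀ q ∈ S, adj p q → q ∈ T) {u a : V} (hu : u ∈ T)
    (h : ReflTransGen (AdjWithin adj S) u a) : a ∈ T ∧ ReflTransGen (AdjWithin adj T) u a := by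
  induction h with
  | refl => exact ⟨hu, .refl⟩
  | tail _ hbc ih =>
    have hc := hT _ ih.1 _ hbc.2.1 hbc.2.2
    exact ⟨hc, ih.2.tail ⟨ih.1, hc, hbc.2.2⟩⟩

/-- Cut the path at its last visit to `x`: after it, the path cannot enter `C`. -/
lemma reflTransGen_adjWithin_sdiff {Y C : Finset V} {x a : V}
    (hC : ∀ p ∈ C, ∀ q ∈ Y.erase x, adj p q → q ∈ C)
    (h : ReflTransGen (AdjWithin adj Y) x a) (ha : a ∉ C) :
    ReflTransGen (AdjWithin adj (Y \ C)) x a := by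
  induction h with
  | refl => exact .refl
  | @tail b c _ hbc ih =>
    by_cases hb : b ∈ C
    · have hcx : c = x := by
        by_contra hcx
        exact ha (hC b hb c (Finset.mem_erase.2 ⟨hcx, hbc.2.1⟩) hbc.2.2)
      exact hcx ▸ .refl
    · exact (ih hb).tail
        ⟨Finset.mem_sdiff.2 ⟨hbc.1, hb⟩, Finset.mem_sdiff.2 ⟨hbc.2.1, ha⟩, hbc.2.2⟩

theorem ConnectedFrom.exists_split {Y : Finset V} {x : V} (hY : ConnectedFrom adj Y x)
    (hne : Y ≠ {x}) :
    ∃ z, adj x z ∧ ∃ C ⊆ Y.erase x, ConnectedFrom adj C z ∧ ConnectedFrom adj (Y \ C) x := by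
  obtain ⟨b, hbY, hbx⟩ : ∃ b ∈ Y, b ≠ x := by
    by_contra! h
    exact hne (Finset.eq_singleton_iff_unique_mem.2 ⟨hY.1, h⟩)
  obtain ⟨z, hz, hxz⟩ := exists_adj_mem_erase_of_reflTransGen (hY.2 b hbY) hbx
  set C := (Y.erase x).filter (ReflTransGen (AdjWithin adj (Y.erase x)) z)
  have hCY : C ⊆ Y.erase x := Finset.filter_subset _ _
  have hC : ∀ p ∈ C, ∀ q ∈ Y.erase x, adj p q → q ∈ C := fun p hp q hq hpq =>
    Finset.mem_filter.2 ⟨hq, (Finset.mem_filter.1 hp).2.tail ⟨hCY hp, hq, hpq⟩⟩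
  have hzC : z ∈ C := Finset.mem_filter.2 ⟨hz, .refl⟩
  have hxC : x ∉ C := fun h => (Finset.mem_erase.1 (hCY h)).1 rfl
  refine ⟨z, hxz, C, hCY, ⟨hzC, fun a ha => ?_⟩, ⟨Finset.mem_sdiff.2 ⟨hY.1, hxC⟩, fun a ha => ?_⟩⟩
  · exact (reflTransGen_adjWithin_of_closed hC hzC (Finset.mem_filter.1 ha).2).2
  · exact reflTransGen_adjWithin_sdiff hC (hY.2 a (Finset.mem_sdiff.1 ha).1)
      (Finset.mem_sdiff.1 ha).2

lemma rootedConnectedSets_one (x : V) : rootedConnectedSets adj 1 x ⊆ {{x}} := by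
  rintro Y ⟨hcard, hx, -⟩
  obtain ⟨y, rfl⟩ := Finset.card_eq_one.1 hcard
  rw [Finset.mem_singleton.1 hx]
  rfl

variable {nb : V → Finset V}

lemma rootedConnectedSets_succ_succ_subset (hnb : ∀ a b, adj a b → b ∈ nb a) (k : ℕ) (x : V) :
    rootedConnectedSets adj (k + 2) x ⊆
      ⋃ z ∈ nb x, ⋃ i : Fin (k + 1), Set.image2 (· ∪ ·)
        (rootedConnectedSets adj (i + 1) z) (rootedConnectedSets adj (k - i + 1) x) := by
  rintro Y ⟨hcard, hY⟩
  have hne : Y ≠ {x} := fun h => by simp [h] at hcard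
  obtain ⟨z, hxz, C, hCY, hC, hYC⟩ := hY.exists_split hne
  have hCpos : 0 < C.card := Finset.card_pos.2 ⟨z, hC.1⟩
  have hCle : C.card ≤ k + 1 := by
    simpa [Finset.card_erase_of_mem hY.1, hcard] using Finset.card_le_card hCY
  have hcardYC : (Y \ C).card = Y.card - C.card :=
    Finset.card_sdiff_of_subset (hCY.trans (Finset.erase_subset x Y))
  simp only [Set.mem_iUnion, Set.mem_image2]
  refine ⟨z, hnb x z hxz, ⟨C.card - 1, by omega⟩, C, ⟨by simp; omega, hC⟩, Y \ C,
    ⟨by simp; omega, hYC⟩, Finset.union_sdiff_of_subset (hCY.trans (Finset.erase_subset x Y))⟩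

theorem encard_rootedConnectedSets_succ_le {Δ : ℕ} (hnb : ∀ a b, adj a b → b ∈ nb a)
    (hΔ : ∀ a, (nb a).card ≤ Δ) (k : ℕ) (x : V) :
    (rootedConnectedSets adj (k + 1) x).encard ≤ (Δ ^ k * catalan k : ℕ) := by
  induction k using Nat.strong_induction_on generalizing x with
  | _ k ih =>
    rcases k with _ | k
    · simpa using Set.encard_le_encard (rootedConnectedSets_one x)
    calc (rootedConnectedSets adj (k + 2) x).encard
        ≤ ∑ z ∈ nb x, ∑ i : Fin (k + 1),
            (rootedConnectedSets adj (i + 1) z).encard *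
              (rootedConnectedSets adj (k - i + 1) x).encard := by
          refine (Set.encard_le_encard (rootedConnectedSets_succ_succ_subset hnb k x)).trans ?_
          refine (Finset.set_encard_biUnion_le _ _).trans (Finset.sum_le_sum fun z _ => ?_)
          refine (Set.encard_iUnion_le_of_fintype _).trans (Finset.sum_le_sum fun i _ => ?_)
          exact Set.encard_image2_le _ _ _
      _ ≤ ∑ z ∈ nb x, ∑ i : Fin (k + 1),
            ((Δ ^ (i : ℕ) * catalan i * (Δ ^ (k - i) * catalan (k - i)) : ℕ) : ℕ∞) := by
          push_cast
          gcongr with z _ i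
          · exact_mod_cast ih i (by omega) z
          · exact_mod_cast ih (k - i) (by omega) x
      _ = ((nb x).card * (Δ ^ k * catalan (k + 1)) : ℕ) := by
          simp only [← Nat.cast_sum, sum_pow_mul_catalan_mul, Finset.sum_const, smul_eq_mul]
      _ ≤ (Δ ^ (k + 1) * catalan (k + 1) : ℕ) := by
          rw [pow_succ', mul_assoc]
          exact_mod_cast Nat.mul_le_mul_right _ (hΔ x)

theorem rootedConnectedSets_finite_and_ncard_le {Δ : ℕ} (hnb : ∀ a b, adj a b → b ∈ nb a)
    (hΔ : ∀ a, (nb a).card ≤ Δ) (n : ℕ) (x : V) :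
    (rootedConnectedSets adj n x).Finite ∧
      (rootedConnectedSets adj n x).ncard ≤ (4 * Δ) ^ (n - 1) := by
  rcases n with _ | k
  · have : rootedConnectedSets adj 0 x = ∅ :=
      Set.eq_empty_of_forall_notMem fun Y ⟨hcard, hx, _⟩ => by
        simp [Finset.card_eq_zero.1 hcard] at hx
    simp [this]
  · rw [← Set.encard_le_coe_iff_finite_ncard_le]
    refine (encard_rootedConnectedSets_succ_le hnb hΔ k x).trans ?_
    rw [Nat.add_sub_cancel, mul_pow, mul_comm (4 ^ k)]
    exact_mod_cast Nat.mul_le_mul_left _ (catalan_le_four_pow k)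

end Relation

namespace IsingReplica

/-- The `(d - 2)`-dimensional unit cube in the definition of `adjFace`. -/
def ridgeSet {d : ℕ} (j₁ j₂ : Fin d) (z : Fin d → ℝ) : Set (Fin d → ℝ) :=
  {x | x j₁ = z j₁ ∧ x j₂ = z j₂ ∧ ∀ j, j ≠ j₁ → j ≠ j₂ → z j ≤ x j ∧ x j ≤ z j + 1}

lemma self_mem_ridgeSet {d : ℕ} (j₁ j₂ : Fin d) (z : Fin d → ℝ) : z ∈ ridgeSet j₁ j₂ z :=
  ⟨rfl, rfl, fun _ _ _ => ⟨le_rfl, by linarith⟩⟩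

lemma ridgeSet_subset_faceSet {d : ℕ} {j₁ j₂ : Fin d} {z : Fin d → ℝ} {F : Face d}
    (h : ridgeSet j₁ j₂ z ⊆ faceSet F) :
    (F.2 = j₁ ∨ F.2 = j₂) ∧ ∀ j, j ≠ j₁ → j ≠ j₂ → (F.1 j : ℝ) = z j + 1 / 2 := by
  have key : ∀ j, j ≠ j₁ → j ≠ j₂ → j ≠ F.2 ∧ (F.1 j : ℝ) = z j + 1 / 2 := by
    intro j h₁ h₂
    have hz := h (self_mem_ridgeSet j₁ j₂ z)
    have hz' : Function.update z j (z j + 1) ∈ faceSet F := h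
      ⟨by simp [Ne.symm h₁], by simp [Ne.symm h₂], fun i _ _ => by
        by_cases hi : i = j
        · subst hi; simp
        · simp [hi]⟩
    by_cases hj : j = F.2
    · have e₁ := hz.1
      have e₂ := hz'.1
      rw [← hj, Function.update_self] at e₂
      rw [← hj] at e₁
      linarith
    · have e₁ := abs_le.1 (hz.2 j hj)
      have e₂ := abs_le.1 (hz'.2 j hj)
      rw [Function.update_self] at e₂
      exact ⟨hj, by linarith [e₁.1, e₂.2]⟩
  refine ⟨?_, fun j h₁ h₂ => (key j h₁ h₂).2⟩
  by_contra! hF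
  exact (key F.2 hF.1 hF.2).1 rfl

lemma int_eq_or_eq_add_one_of_abs_sub_le {a b : ℤ} {t : ℝ} (ha : t = a + 1 / 2)
    (hb : |t - b| ≤ 1 / 2) : b = a ∨ b = a + 1 := by
  have h₁ : (a : ℝ) ≤ b := by linarith [(abs_le.1 hb).2]
  have h₂ : (b : ℝ) ≤ a + 1 := by linarith [(abs_le.1 hb).1]
  have h₁' : a ≤ b := by exact_mod_cast h₁
  have h₂' : b ≤ a + 1 := by exact_mod_cast h₂
  omega

lemma int_sub_le_one_of_abs_sub_le {a b : ℤ} {t : ℝ} (ha : |t - a| ≤ 1 / 2)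
    (hb : |t - b| ≤ 1 / 2) : a - 1 ≤ b ∧ b ≤ a + 1 := by
  have h₁ : (a : ℝ) - 1 ≤ b := by linarith [(abs_le.1 ha).1, (abs_le.1 hb).2]
  have h₂ : (b : ℝ) ≤ a + 1 := by linarith [(abs_le.1 ha).2, (abs_le.1 hb).1]
  exact ⟨by exact_mod_cast h₁, by exact_mod_cast h₂⟩

lemma eq_add_smul_unitVec_add_smul_unitVec {d : ℕ} {c c' : Site d} {k j₀ : Fin d}
    (hj₀ : j₀ ≠ k) (h : ∀ j, j ≠ k → j ≠ j₀ → c' j = c j) :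
    c' = c + (c' k - c k) • unitVec k + (c' j₀ - c j₀) • unitVec j₀ := by
  funext j
  by_cases hk : j = k
  · subst hk; simp [unitVec, Ne.symm hj₀]
  · by_cases hj : j = j₀
    · subst hj; simp [unitVec, hk]
    · simp [unitVec, hk, hj, h j hk hj]

/-- The neighbour candidates of `(c, k)`: a triple `(a, b, k')` chosen for the direction
`j ≠ k` stands for the face `(c + a • e_k + b • e_j, k')`. -/
def faceNbrs {d : ℕ} (F : Face d) : Finset (Face d) :=
  (Finset.univ.erase F.2).biUnion fun j =>
    ({(0, 1, F.2), (0, -1, F.2), (0, 0, j), (0, -1, j), (1, 0, j), (1, -1, j)} :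
        Finset (ℤ × ℤ × Fin d)).image
      fun s => (F.1 + s.1 • unitVec F.2 + s.2.1 • unitVec j, s.2.2)

lemma card_faceNbrs_le {d : ℕ} (F : Face d) : (faceNbrs F).card ≤ 6 * (d - 1) := by
  calc (faceNbrs F).card ≤ (Finset.univ.erase F.2).card * 6 :=
        Finset.card_biUnion_le_card_mul _ _ 6 fun _ _ =>
          Finset.card_image_le.trans Finset.card_le_six
    _ = 6 * (d - 1) := by simp [Finset.card_erase_of_mem, mul_comm]

lemma mem_faceNbrs_of_adjFace {d : ℕ} {F F' : Face d} (h : adjFace F F') : F' ∈ faceNbrs F := by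
  obtain ⟨c, k⟩ := F
  obtain ⟨c', k'⟩ := F'
  obtain ⟨hne, j₁, j₂, hj, z, hsub⟩ := h
  have hF := ridgeSet_subset_faceSet (hsub.trans Set.inter_subset_left)
  have hF' := ridgeSet_subset_faceSet (hsub.trans Set.inter_subset_right)
  obtain ⟨hz, hz'⟩ := hsub (self_mem_ridgeSet j₁ j₂ z)
  simp only [faceSet, Set.mem_ofPred_eq] at hz hz'
  obtain ⟨j₀, hj₀, hk', hother⟩ : ∃ j₀, j₀ ≠ k ∧ (k' = k ∨ k' = j₀) ∧
      ∀ j, j ≠ k → j ≠ j₀ → j ≠ j₁ ∧ j ≠ j₂ := by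
    rcases hF.1 with rfl | rfl
    · exact ⟨j₂, Ne.symm hj, hF'.1, fun j h₁ h₂ => ⟨h₁, h₂⟩⟩
    · exact ⟨j₁, hj, hF'.1.symm, fun j h₁ h₂ => ⟨h₂, h₁⟩⟩
  have hc : ∀ j, j ≠ k → j ≠ j₀ → c' j = c j := fun j h₁ h₂ => by
    obtain ⟨hj₁, hj₂⟩ := hother j h₁ h₂
    exact_mod_cast (hF'.2 j hj₁ hj₂).trans (hF.2 j hj₁ hj₂).symm
  have hc' := eq_add_smul_unitVec_add_smul_unitVec hj₀ hc
  rw [faceNbrs, Finset.mem_biUnion]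
  refine ⟨j₀, Finset.mem_erase.2 ⟨hj₀, Finset.mem_univ _⟩,
    Finset.mem_image.2 ⟨(c' k - c k, c' j₀ - c j₀, k'), ?_, by rw [← hc']⟩⟩
  simp only [Finset.mem_insert, Finset.mem_singleton, Prod.mk.injEq]
  rcases hk' with rfl | rfl
  · have hk : c' k' = c k' := by exact_mod_cast add_right_cancel (hz'.1.symm.trans hz.1)
    have hb := int_sub_le_one_of_abs_sub_le (hz.2 j₀ hj₀) (hz'.2 j₀ hj₀)
    have hb₀ : c' j₀ ≠ c j₀ := fun hb₀ => hne (by rw [hc', hk, hb₀]; simp)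
    simp only [Ne.symm hj₀, and_true, and_false, or_false]
    omega
  · have ha := int_eq_or_eq_add_one_of_abs_sub_le hz.1 (hz'.2 k (Ne.symm hj₀))
    have hb := int_eq_or_eq_add_one_of_abs_sub_le hz'.1 (hz.2 k' hj₀)
    simp only [hj₀, and_true, and_false, false_or]
    omega

lemma four_mul_sub_one_le_two_pow (d : ℕ) : 4 * (d - 1) ≤ 2 ^ d := by
  rcases d with _ | _ | m
  · simp
  · simp
  · have := Nat.lt_two_pow_self (n := m)
    rw [pow_succ, pow_succ]
    omega

lemma four_mul_six_mul_sub_one_le (d : ℕ) :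
    ((4 * (6 * (d - 1)) : ℕ) : ℝ) ≤ 3 * Real.exp 1 * 2 ^ d :=
  calc ((4 * (6 * (d - 1)) : ℕ) : ℝ) = 6 * ((4 * (d - 1) : ℕ) : ℝ) := by push_cast; ring
    _ ≤ 6 * 2 ^ d := by gcongr; exact_mod_cast four_mul_sub_one_le_two_pow d
    _ ≤ 3 * Real.exp 1 * 2 ^ d :=
      mul_le_mul_of_nonneg_right (by linarith [Real.add_one_le_exp 1]) (by positivity)

theorem entropy_bound_random_surfaces_general (d : ℕ) (S₀ : Face d)
    (r : ℕ) :
    {Y : Finset (Face d) | Y.card = r ∧ S₀ ∈ Y ∧ SurfConnected Y}.Finite ∧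
      (({Y : Finset (Face d) | Y.card = r ∧ S₀ ∈ Y ∧ SurfConnected Y}.ncard : ℝ) ≤
        (3 * Real.exp 1 * 2 ^ d) ^ r) := by
  have hsub : {Y : Finset (Face d) | Y.card = r ∧ S₀ ∈ Y ∧ SurfConnected Y} ⊆
      Relation.rootedConnectedSets adjFace r S₀ :=
    fun Y ⟨hcard, hS₀, hconn⟩ => ⟨hcard, hS₀, hconn S₀ hS₀⟩
  obtain ⟨hfin, hcard⟩ := Relation.rootedConnectedSets_finite_and_ncard_le
    (fun _ _ => mem_faceNbrs_of_adjFace) card_faceNbrs_le r S₀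
  refine ⟨hfin.subset hsub, ?_⟩
  have hk : (1 : ℝ) ≤ 3 * Real.exp 1 * 2 ^ d := by
    nlinarith [Real.add_one_le_exp 1, one_le_pow₀ (M₀ := ℝ) (a := 2) (by norm_num) (n := d)]
  calc _ ≤ (((4 * (6 * (d - 1))) ^ (r - 1) : ℕ) : ℝ) := by
        exact_mod_cast (Set.ncard_le_ncard hsub hfin).trans hcard
    _ ≤ (3 * Real.exp 1 * 2 ^ d) ^ (r - 1) := by
        rw [Nat.cast_pow]
        exact pow_le_pow_left₀ (Nat.cast_nonneg _) (four_mul_six_mul_sub_one_le d) _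
    _ ≤ (3 * Real.exp 1 * 2 ^ d) ^ r := pow_le_pow_right₀ hk (Nat.sub_le r 1)

/-- **Entropy bound for random lattice surfaces.** For `d ≥ 2`, a fixed face `S₀` and
`r ≥ 1`, the number `N(r)` of connected surfaces with exactly `r` faces containing `S₀`
satisfies `N(r) ≤ k_d^r` with `k_d = 3e·2^d`. -/
theorem entropy_bound_random_surfaces (d : ℕ) (hd : 2 ≤ d) (S₀ : Face d)
    (r : ℕ) (hr : 1 ≤ r) :
    {Y : Finset (Face d) | Y.card = r ∧ S₀ ∈ Y ∧ SurfConnected Y}.Finite ∧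
      (({Y : Finset (Face d) | Y.card = r ∧ S₀ ∈ Y ∧ SurfConnected Y}.ncard : ℝ) ≤
        (3 * Real.exp 1 * 2 ^ d) ^ r) :=
  entropy_bound_random_surfaces_general d S₀ r

end IsingReplica
end
end
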